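/- arXiv:2102.12800 — 4 statements merged into one kernel-verified Lean document; each statement's English description precedes it below -/
import Mathlib

section
/- Let $g : [0,T] \to \mathbb{R}$ be càdlàg, $C_t = \sup_{t \le s \le T} g(s)$, and let $\mu$ be the (nonnegative) Stieltjes measure associated with the nonincreasing function $C$ (i.e., $\mu((a,b]) = C_a - C_b$). Then $\mu$ is carried by the set $\{s : C_{s-} = g(s-)\}$; equivalently, $\int_0^T \mathbf{1}_{\{C_{s-} > g(s-)\}}\, d\mu(s) = 0$. -/
/-! If `g(s-) < C(s-)`, then just left of `s` the function `g` stays below a level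
`c < C(s-) ≤ C t`, so the supremum defining `C t` is attained on `[s, T]`: `C t = C s`, and
`μ (t, s] = 0`. A set each of whose points has a `μ`-null interval on its left is `μ`-null: the
open parts of these intervals cover all but a set of points whose left intervals are pairwise
disjoint, hence countably many. Compactness keeps a càdlàg `g` bounded on `[0, T]`, so all the
suprema are finite. -/

open Set Filter Topology MeasureTheory

theorem IsCompact.bddAbove_image_of_isBoundedUnder {X β : Type*} [TopologicalSpace X]
    [SemilatticeSup β] [Nonempty β] {K : Set X} {g : X → β} (hK : IsCompact K)
    (hg : ∀ x ∈ K, IsBoundedUnder (· ≤ ·) (𝓝[K] x) g) : BddAbove (g '' K) := by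
  refine hK.induction_on (p := fun s => BddAbove (g '' s)) (by simp)
    (fun s t hst ht => ht.mono (image_mono hst))
    (fun s t hs ht => by rw [image_union]; exact hs.union ht) ?_
  intro x hx
  obtain ⟨M, hM⟩ := hg x hx
  exact ⟨{y | g y ≤ M}, hM, M, forall_mem_image.2 fun _ hy => hy⟩

theorem isBoundedUnder_le_nhdsWithin_Icc_of_exists_tendsto {a b x : ℝ} {g : ℝ → ℝ}
    (hr : ∀ t ∈ Ico a b, ∃ l, Tendsto g (𝓝[>] t) (𝓝 l))
    (hl : ∀ t ∈ Ioc a b, ∃ l, Tendsto g (𝓝[<] t) (𝓝 l)) (hx : x ∈ Icc a b) :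
    IsBoundedUnder (· ≤ ·) (𝓝[Icc a b] x) g := by
  have hleft : IsBoundedUnder (· ≤ ·) (𝓝[Iio x ∩ Icc a b] x) g := by
    rcases hx.1.eq_or_lt with rfl | hax
    · rw [show Iio a ∩ Icc a b = ∅ from
        eq_empty_of_forall_notMem fun y hy => lt_irrefl y (hy.1.trans_le hy.2.1),
        nhdsWithin_empty]
      exact ⟨0, by simp⟩
    · obtain ⟨l, hl⟩ := hl x ⟨hax, hx.2⟩
      exact hl.isBoundedUnder_le.mono (nhdsWithin_mono _ inter_subset_left)
  have hright : IsBoundedUnder (· ≤ ·) (𝓝[Ioi x ∩ Icc a b] x) g := by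
    rcases hx.2.eq_or_lt with rfl | hxb
    · rw [show Ioi x ∩ Icc a x = ∅ from
        eq_empty_of_forall_notMem fun y hy => lt_irrefl x (hy.1.trans_le hy.2.2),
        nhdsWithin_empty]
      exact ⟨0, by simp⟩
    · obtain ⟨l, hl⟩ := hr x ⟨hx.1, hxb⟩
      exact hl.isBoundedUnder_le.mono (nhdsWithin_mono _ inter_subset_left)
  have hsplit :
      𝓝[Icc a b] x ≤ 𝓝[Iio x ∩ Icc a b] x ⊔ pure x ⊔ 𝓝[Ioi x ∩ Icc a b] x := by
    rw [← nhdsWithin_singleton, ← nhdsWithin_union, ← nhdsWithin_union]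
    refine nhdsWithin_mono _ fun y hy => ?_
    rcases lt_trichotomy y x with h | rfl | h
    · exact Or.inl (Or.inl ⟨h, hy⟩)
    · exact Or.inl (Or.inr rfl)
    · exact Or.inr ⟨h, hy⟩
  refine IsBounded.mono (map_mono hsplit) ?_
  simp only [Filter.map_sup]
  exact isBounded_sup (isBounded_sup hleft ⟨g x, by simp⟩) hright

theorem bddAbove_image_Icc_of_exists_tendsto_nhdsGT_nhdsLT {a b : ℝ} {g : ℝ → ℝ}
    (hr : ∀ t ∈ Ico a b, ∃ l, Tendsto g (𝓝[>] t) (𝓝 l))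
    (hl : ∀ t ∈ Ioc a b, ∃ l, Tendsto g (𝓝[<] t) (𝓝 l)) : BddAbove (g '' Icc a b) :=
  isCompact_Icc.bddAbove_image_of_isBoundedUnder fun _ hx =>
    isBoundedUnder_le_nhdsWithin_Icc_of_exists_tendsto hr hl hx

theorem measure_eq_zero_of_forall_exists_Ioc_null {α : Type*} [LinearOrder α]
    [TopologicalSpace α] [OrderTopology α] [DenselyOrdered α] [SecondCountableTopology α]
    [MeasurableSpace α] {μ : Measure α} {S : Set α}
    (h : ∀ s ∈ S, ∃ a < s, μ (Ioc a s) = 0) : μ S = 0 := by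
  choose! a has hnull using h
  set V := ⋃ s ∈ S, Ioo (a s) s
  have hV : μ V = 0 := measure_null_of_locally_null V fun x hx => by
    obtain ⟨s, hs, hxs⟩ := mem_iUnion₂.1 hx
    exact ⟨Ioo (a s) s, mem_nhdsWithin_of_mem_nhds (isOpen_Ioo.mem_nhds hxs),
      measure_mono_null Ioo_subset_Ioc_self (hnull s hs)⟩
  have hE : (S \ V).Countable := by
    refine PairwiseDisjoint.countable_of_isOpen (s := fun s => Ioo (a s) s) ?_
      (fun _ _ => isOpen_Ioo) fun s hs => nonempty_Ioo.2 (has s hs.1)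
    intro s₁ h₁ s₂ h₂ hne
    wlog h : s₁ < s₂ generalizing s₁ s₂
    · exact (this h₂ h₁ hne.symm (hne.lt_or_gt.resolve_left h)).symm
    have hle : s₁ ≤ a s₂ := not_lt.1 fun h' => h₁.2 (mem_biUnion h₂.1 ⟨h', h⟩)
    exact disjoint_left.2 fun y hy₁ hy₂ => lt_asymm (hy₁.2.trans_le hle) hy₂.1
  have hcover : S ⊆ V ∪ ⋃ s ∈ S \ V, Ioc (a s) s := fun s hs => by
    by_cases hsV : s ∈ V
    · exact Or.inl hsV
    · exact Or.inr (mem_biUnion ⟨hs, hsV⟩ ⟨has s hs, le_rfl⟩)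
  exact measure_mono_null hcover <|
    measure_union_null hV ((measure_biUnion_null_iff hE).2 fun s hs => hnull s hs.1)

section FutureSup

variable {α β : Type*} [LinearOrder α] [ConditionallyCompleteLinearOrder β] {g : α → β}

theorem antitoneOn_sSup_image_Icc {a T : α} (hg : BddAbove (g '' Icc a T)) :
    AntitoneOn (fun t => sSup (g '' Icc t T)) (Icc a T) := fun _ h₁ _ h₂ h₁₂ =>
  csSup_le_csSup (hg.mono (image_mono (Icc_subset_Icc_left h₁.1)))
    ((nonempty_Icc.2 h₂.2).image g) (image_mono (Icc_subset_Icc_left h₁₂))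

theorem sSup_image_Icc_le_max {t s T : α} {c : β} (hts : t ≤ s) (hsT : s ≤ T)
    (hg : BddAbove (g '' Icc s T)) (hc : ∀ u ∈ Ico t s, g u ≤ c) :
    sSup (g '' Icc t T) ≤ max c (sSup (g '' Icc s T)) := by
  refine csSup_le ((nonempty_Icc.2 (hts.trans hsT)).image g) <|
    forall_mem_image.2 fun u hu => ?_
  rcases lt_or_ge u s with hus | hsu
  · exact le_max_of_le_left (hc u ⟨hu.1, hus⟩)
  · exact le_max_of_le_right (le_csSup hg (mem_image_of_mem g ⟨hsu, hu.2⟩))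

end FutureSup

theorem exists_mem_Ico_eq_of_tendsto_nhdsLT_lt {g C : ℝ → ℝ} {a T s Cs gs : ℝ}
    (hg : BddAbove (g '' Icc a T)) (hC : ∀ t ∈ Icc a T, C t = sSup (g '' Icc t T))
    (hs : s ∈ Ioc a T) (hCs : Tendsto C (𝓝[<] s) (𝓝 Cs))
    (hgs : Tendsto g (𝓝[<] s) (𝓝 gs)) (hlt : gs < Cs) : ∃ t ∈ Ico a s, C t = C s := by
  obtain ⟨c, hgc, hcC⟩ := exists_between hlt
  obtain ⟨b, hbs, hb⟩ := mem_nhdsLT_iff_exists_Ioo_subset.1 (hgs.eventually_lt_const hgc)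
  obtain ⟨t, hbt, hts⟩ := exists_between (max_lt hbs hs.1)
  have hsI : s ∈ Icc a T := ⟨hs.1.le, hs.2⟩
  have htI : t ∈ Icc a T := ⟨(le_max_right _ _).trans hbt.le, hts.le.trans hs.2⟩
  have hanti : AntitoneOn C (Icc a T) :=
    (antitoneOn_sSup_image_Icc hg).congr fun u hu => (hC u hu).symm
  have hCs_le : Cs ≤ C t := le_of_tendsto hCs <| mem_of_superset (Ioo_mem_nhdsLT hts)
    fun u hu => hanti htI ⟨htI.1.trans hu.1.le, hu.2.le.trans hs.2⟩ hu.1.le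
  have hCt_le : C t ≤ max c (C s) := by
    rw [hC t htI, hC s hsI]
    refine sSup_image_Icc_le_max hts.le hs.2
      (hg.mono (image_mono (Icc_subset_Icc_left hsI.1))) fun u hu =>
        (hb ⟨(le_max_left _ _).trans_lt (hbt.trans_le hu.1), hu.2⟩).le
  refine ⟨t, ⟨htI.1, hts⟩, le_antisymm ?_ (hanti htI hsI hts.le)⟩
  exact (le_max_iff.1 hCt_le).resolve_left (hcC.trans_le hCs_le).not_ge

theorem futureSup_stieltjes_flat_off_general
    (T : ℝ) (g C : ℝ → ℝ)
    (hrc : ∀ t ∈ Ico (0:ℝ) T, Tendsto g (nhdsWithin t (Ioi t)) (nhds (g t)))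
    (hll : ∀ t ∈ Ioc (0:ℝ) T, ∃ l, Tendsto g (nhdsWithin t (Iio t)) (nhds l))
    (hC : ∀ t ∈ Icc (0:ℝ) T, C t = sSup (g '' Icc t T))
    (Cm gm : ℝ → ℝ)
    (hCm : ∀ s ∈ Ioc (0:ℝ) T, Tendsto C (nhdsWithin s (Iio s)) (nhds (Cm s)))
    (hgm : ∀ s ∈ Ioc (0:ℝ) T, Tendsto g (nhdsWithin s (Iio s)) (nhds (gm s)))
    (F : StieltjesFunction ℝ) (hF : ∀ t ∈ Icc (0:ℝ) T, F t = -C t) :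
    F.measure {s ∈ Ioc (0:ℝ) T | gm s < Cm s} = 0 := by
  have hg : BddAbove (g '' Icc 0 T) :=
    bddAbove_image_Icc_of_exists_tendsto_nhdsGT_nhdsLT (fun t ht => ⟨g t, hrc t ht⟩) hll
  refine measure_eq_zero_of_forall_exists_Ioc_null fun s ⟨hs, hlt⟩ => ?_
  obtain ⟨t, ⟨ht0, hts⟩, hCt⟩ :=
    exists_mem_Ico_eq_of_tendsto_nhdsLT_lt hg hC hs (hCm s hs) (hgm s hs) hlt
  refine ⟨t, hts, ?_⟩
  rw [F.measure_Ioc, hF s ⟨hs.1.le, hs.2⟩, hF t ⟨ht0, hts.le.trans hs.2⟩, hCt, sub_self,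
    ENNReal.ofReal_zero]

/-- The Stieltjes measure `μ` of the nonincreasing right-continuous future-supremum
`C t = sup_{t ≤ s ≤ T} g s` (realized via the nondecreasing Stieltjes function
`F = -C`) is carried by the set `{s : C_{s-} = g(s-)}`:
`μ {s ∈ (0,T] : C_{s-} > g(s-)} = 0`. -/
theorem futureSup_stieltjes_flat_off
    (T : ℝ) (hT : 0 < T) (g C : ℝ → ℝ)
    (hrc : ∀ t ∈ Ico (0:ℝ) T, Tendsto g (nhdsWithin t (Ioi t)) (nhds (g t)))
    (hll : ∀ t ∈ Ioc (0:ℝ) T, ∃ l, Tendsto g (nhdsWithin t (Iio t)) (nhds l))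
    (hC : ∀ t ∈ Icc (0:ℝ) T, C t = sSup (g '' Icc t T))
    (Cm gm : ℝ → ℝ)
    (hCm : ∀ s ∈ Ioc (0:ℝ) T, Tendsto C (nhdsWithin s (Iio s)) (nhds (Cm s)))
    (hgm : ∀ s ∈ Ioc (0:ℝ) T, Tendsto g (nhdsWithin s (Iio s)) (nhds (gm s)))
    (F : StieltjesFunction ℝ) (hF : ∀ t ∈ Icc (0:ℝ) T, F t = -C t) :
    F.measure {s ∈ Ioc (0:ℝ) T | gm s < Cm s} = 0 :=
  futureSup_stieltjes_flat_off_general T g C hrc hll hC Cm gm hCm hgm F hF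
end

section
/- Let $X$ be a càdlàg adapted process dominated by a nonnegative uniformly integrable martingale, $Y$ its Snell envelope with Doob–Meyer decomposition $Y = M + B$, $M_0 = 0$, and $C_t = \sup_{t \le s \le T}(X_s - M_s)$. Then for each $t$, $X_T - M_T \le C_t \le B_t$, so that $C_t$ is integrable, and moreover $B_t \le E(C_t \mid \mathcal{F}_t)$; combining these yields $C_t = B_t$ a.s. for each $t$. -/
open Set Filter MeasureTheory

variable {Ω : Type*} {m0 : MeasurableSpace Ω}

/-- A process is a martingale on the time interval `[0,T]`. -/
def MartingaleOn (ℱ : Filtration ℝ m0) (μ : Measure Ω) (M : ℝ → Ω → ℝ) (T : ℝ) : Prop :=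
  (∀ t ∈ Icc (0:ℝ) T, StronglyMeasurable[ℱ t] (M t)) ∧
  (∀ t ∈ Icc (0:ℝ) T, Integrable (M t) μ) ∧
  ∀ s t : ℝ, s ∈ Icc (0:ℝ) T → t ∈ Icc (0:ℝ) T → s ≤ t → μ[M t | ℱ s] =ᵐ[μ] M s

/-- A process is a supermartingale on the time interval `[0,T]`. -/
def SupermartingaleOn (ℱ : Filtration ℝ m0) (μ : Measure Ω) (M : ℝ → Ω → ℝ) (T : ℝ) : Prop :=
  (∀ t ∈ Icc (0:ℝ) T, StronglyMeasurable[ℱ t] (M t)) ∧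
  (∀ t ∈ Icc (0:ℝ) T, Integrable (M t) μ) ∧
  ∀ s t : ℝ, s ∈ Icc (0:ℝ) T → t ∈ Icc (0:ℝ) T → s ≤ t → μ[M t | ℱ s] ≤ᵐ[μ] M s

/-- A process is a submartingale on the time interval `[0,T]`. -/
def SubmartingaleOn (ℱ : Filtration ℝ m0) (μ : Measure Ω) (M : ℝ → Ω → ℝ) (T : ℝ) : Prop :=
  (∀ t ∈ Icc (0:ℝ) T, StronglyMeasurable[ℱ t] (M t)) ∧
  (∀ t ∈ Icc (0:ℝ) T, Integrable (M t) μ) ∧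
  ∀ s t : ℝ, s ∈ Icc (0:ℝ) T → t ∈ Icc (0:ℝ) T → s ≤ t → M s ≤ᵐ[μ] μ[M t | ℱ s]

/-- A real function is càdlàg on `[0,T]`: right-continuous on `[0,T)` with
left limits on `(0,T]`. -/
def CadlagOn (f : ℝ → ℝ) (T : ℝ) : Prop :=
  (∀ t ∈ Ico (0:ℝ) T, Tendsto f (nhdsWithin t (Ioi t)) (nhds (f t))) ∧
  ∀ t ∈ Ioc (0:ℝ) T, ∃ l, Tendsto f (nhdsWithin t (Iio t)) (nhds l)

/-- The predictable σ-algebra on `ℝ × Ω` associated with the filtration `ℱ`,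
generated by the stochastic intervals `(a,b] × A`, `A ∈ ℱ a`, together with the
time-zero sets `{0} × A`, `A ∈ ℱ 0`. -/
def predictableSigma (ℱ : Filtration ℝ m0) : MeasurableSpace (ℝ × Ω) :=
  MeasurableSpace.generateFrom
    ({s | ∃ a b : ℝ, ∃ A : Set Ω, a < b ∧ MeasurableSet[ℱ a] A ∧ s = Ioc a b ×ˢ A} ∪
      {s | ∃ A : Set Ω, MeasurableSet[ℱ 0] A ∧ s = ({0} : Set ℝ) ×ˢ A})

/-- A process is predictable if it is measurable with respect to the predictable
σ-algebra. -/
def IsPredictable (ℱ : Filtration ℝ m0) (Z : ℝ → Ω → ℝ) : Prop :=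
  Measurable[predictableSigma ℱ] (Function.uncurry Z)

lemma rightCont_bound {f : ℝ → ℝ} {t T c s : ℝ}
    (hcont : ∀ u ∈ Ico (0:ℝ) T, Tendsto f (nhdsWithin u (Ioi u)) (nhds (f u)))
    (ht : 0 ≤ t)
    (hq : ∀ u ∈ insert T (Icc t T ∩ Set.range ((↑) : ℚ → ℝ)), f u ≤ c)
    (hs : s ∈ Icc t T) : f s ≤ c := by
  rcases eq_or_lt_of_le hs.2 with h | h
  · rw [h]; exact hq T (mem_insert _ _)
  · have hcont' := hcont s ⟨le_trans ht hs.1, h⟩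
    set Q : Set ℝ := Ioo s T ∩ Set.range ((↑) : ℚ → ℝ) with hQ
    have hclos : s ∈ closure Q := by
      rw [Metric.mem_closure_iff]
      intro ε hε
      obtain ⟨q, hq1, hq2⟩ := exists_rat_btwn (lt_min h (lt_add_of_pos_right s hε))
      refine ⟨(q : ℝ), ⟨⟨hq1, (hq2.trans_le (min_le_left _ _))⟩, ⟨q, rfl⟩⟩, ?_⟩
      rw [Real.dist_eq, abs_sub_comm, abs_of_pos (by linarith [hq1])]
      have := hq2.trans_le (min_le_right _ _)
      linarith
    have hne : (nhdsWithin s Q).NeBot := mem_closure_iff_nhdsWithin_neBot.mp hclos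
    have h1 : Tendsto f (nhdsWithin s Q) (nhds (f s)) :=
      hcont'.mono_left (nhdsWithin_mono s (fun x hx => hx.1.1))
    refine le_of_tendsto h1 ?_
    filter_upwards [self_mem_nhdsWithin] with x hx
    exact hq x (mem_insert_of_mem _ ⟨⟨(hs.1.trans hx.1.1.le), hx.1.2.le⟩, hx.2⟩)

lemma sSup_image_Icc_eq_rat {f : ℝ → ℝ} {t T : ℝ}
    (hcont : ∀ u ∈ Ico (0:ℝ) T, Tendsto f (nhdsWithin u (Ioi u)) (nhds (f u)))
    (ht : 0 ≤ t) (htT : t ≤ T) :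
    sSup (f '' Icc t T) = sSup (f '' insert T (Icc t T ∩ Set.range ((↑) : ℚ → ℝ))) := by
  set D := insert T (Icc t T ∩ Set.range ((↑) : ℚ → ℝ)) with hD
  have hDsub : D ⊆ Icc t T := by
    rintro x hx
    rcases hx with rfl | hx
    · exact ⟨htT, le_rfl⟩
    · exact hx.1
  have hsub : f '' D ⊆ f '' Icc t T := image_mono (f := f) hDsub
  have hne2 : (f '' D).Nonempty := ⟨f T, mem_image_of_mem f (mem_insert _ _)⟩
  by_cases hbdd : BddAbove (f '' D)
  · have hb1 : BddAbove (f '' Icc t T) := by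
      refine ⟨sSup (f '' D), ?_⟩
      rintro x ⟨u, hu, rfl⟩
      exact rightCont_bound hcont ht (fun v hv => le_csSup hbdd (mem_image_of_mem f hv)) hu
    refine le_antisymm ?_ (csSup_le_csSup hb1 hne2 hsub)
    refine csSup_le (hne2.mono hsub) ?_
    rintro x ⟨u, hu, rfl⟩
    exact rightCont_bound hcont ht (fun v hv => le_csSup hbdd (mem_image_of_mem f hv)) hu
  · have h2 : ¬ BddAbove (f '' Icc t T) := fun h => hbdd (h.mono hsub)
    rw [Real.sSup_of_not_bddAbove hbdd, Real.sSup_of_not_bddAbove h2]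

/-- Key estimates in the existence proof: for each `t`,
`X T - M T ≤ C t ≤ B t` (so `C t` is integrable), `B t ≤ E(C t | ℱ t)`, and
combining these, `C t = B t` almost surely. -/
theorem futureSup_sandwich
    (μ : Measure Ω) [IsProbabilityMeasure μ] (ℱ : Filtration ℝ m0)
    (T : ℝ) (hT : 0 < T) (X U Y M B C : ℝ → Ω → ℝ)
    (hXad : ∀ t ∈ Icc (0:ℝ) T, StronglyMeasurable[ℱ t] (X t))
    (hXcadlag : ∀ ω, CadlagOn (fun t => X t ω) T)
    (hUmart : MartingaleOn ℱ μ U T)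
    (hUnn : ∀ t ∈ Icc (0:ℝ) T, ∀ ω, 0 ≤ U t ω)
    (hUui : UniformIntegrable (fun t : Icc (0:ℝ) T => U t) 1 μ)
    (hdom : ∀ t ∈ Icc (0:ℝ) T, ∀ ω, |X t ω| ≤ U t ω)
    -- `Y` is the Snell envelope: the smallest supermartingale dominating `X`
    (hYsuper : SupermartingaleOn ℱ μ Y T)
    (hYdom : ∀ t ∈ Icc (0:ℝ) T, ∀ᵐ ω ∂μ, X t ω ≤ Y t ω)
    (hYmin : ∀ Z : ℝ → Ω → ℝ, SupermartingaleOn ℱ μ Z T →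
      (∀ t ∈ Icc (0:ℝ) T, ∀ᵐ ω ∂μ, X t ω ≤ Z t ω) →
      ∀ t ∈ Icc (0:ℝ) T, ∀ᵐ ω ∂μ, Y t ω ≤ Z t ω)
    -- Doob–Meyer decomposition `Y = M + B`
    (hMmart : MartingaleOn ℱ μ M T) (hM0 : ∀ ω, M 0 ω = 0)
    (hMcadlag : ∀ ω, CadlagOn (fun t => M t ω) T)
    (hBpred : IsPredictable ℱ B)
    (hBanti : ∀ ω, AntitoneOn (fun t => B t ω) (Icc 0 T))
    (hBint : ∀ t ∈ Icc (0:ℝ) T, Integrable (B t) μ)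
    (hDM : ∀ t ∈ Icc (0:ℝ) T, ∀ᵐ ω ∂μ, Y t ω = M t ω + B t ω)
    -- the future-supremum process
    (hCdef : ∀ t ∈ Icc (0:ℝ) T, ∀ ω, C t ω = sSup ((fun s => X s ω - M s ω) '' Icc t T)) :
    ∀ t ∈ Icc (0:ℝ) T,
      (∀ᵐ ω ∂μ, X T ω - M T ω ≤ C t ω ∧ C t ω ≤ B t ω) ∧
      Integrable (C t) μ ∧
      (B t ≤ᵐ[μ] μ[C t | ℱ t]) ∧
      C t =ᵐ[μ] B t := by
  have hTmem : T ∈ Icc (0:ℝ) T := ⟨hT.le, le_rfl⟩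
  -- right continuity of X - M, pointwise in ω
  have hg : ∀ ω, ∀ u ∈ Ico (0:ℝ) T,
      Tendsto (fun s => X s ω - M s ω) (nhdsWithin u (Ioi u)) (nhds (X u ω - M u ω)) :=
    fun ω u hu => ((hXcadlag ω).1 u hu).sub ((hMcadlag ω).1 u hu)
  -- integrability of X
  have hXint : ∀ s ∈ Icc (0:ℝ) T, Integrable (X s) μ := by
    intro s hs
    refine Integrable.mono' (hUmart.2.1 s hs)
      (((hXad s hs).mono (ℱ.le s)).aestronglyMeasurable) ?_
    exact Eventually.of_forall fun ω => by
      simpa [Real.norm_eq_abs] using hdom s hs ω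
  -- the key a.e. bound: for s ∈ [t,T], X s - M s ≤ B t
  have hbnd : ∀ t, t ∈ Icc (0:ℝ) T →
      ∀ᵐ ω ∂μ, ∀ s ∈ Icc t T, X s ω - M s ω ≤ B t ω := by
    intro t ht
    set D : Set ℝ := insert T (Icc t T ∩ Set.range ((↑) : ℚ → ℝ)) with hDdef
    have hDsub : D ⊆ Icc t T := by
      rintro x hx
      rcases hx with rfl | hx
      · exact ⟨ht.2, le_rfl⟩
      · exact hx.1
    have hDcnt : D.Countable :=
      ((Set.countable_range _).mono inter_subset_right).insert T
    have hDa : ∀ᵐ ω ∂μ, ∀ s ∈ D, X s ω - M s ω ≤ B t ω := by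
      rw [ae_ball_iff hDcnt]
      intro s hsD
      have hs' : s ∈ Icc (0:ℝ) T := ⟨ht.1.trans (hDsub hsD).1, (hDsub hsD).2⟩
      filter_upwards [hYdom s hs', hDM s hs'] with ω h1 h2
      have h3 : B s ω ≤ B t ω := hBanti ω ht hs' (hDsub hsD).1
      linarith
    filter_upwards [hDa] with ω hω
    intro s hs
    exact rightCont_bound (f := fun u => X u ω - M u ω) (hg ω) ht.1 hω hs
  -- C t is measurable
  have hCmeas : ∀ t, t ∈ Icc (0:ℝ) T → Measurable (C t) := by
    intro t ht
    set D : Set ℝ := insert T (Icc t T ∩ Set.range ((↑) : ℚ → ℝ)) with hDdef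
    have hDsub : D ⊆ Icc t T := by
      rintro x hx
      rcases hx with rfl | hx
      · exact ⟨ht.2, le_rfl⟩
      · exact hx.1
    have hDcnt : D.Countable :=
      ((Set.countable_range _).mono inter_subset_right).insert T
    obtain ⟨e, he⟩ := hDcnt.exists_eq_range ⟨T, mem_insert _ _⟩
    have hCe : C t = fun ω => ⨆ n, (X (e n) ω - M (e n) ω) := by
      funext ω
      rw [hCdef t ht ω, sSup_image_Icc_eq_rat (hg ω) ht.1 ht.2, ← hDdef, he,
        ← Set.range_comp]
      rfl
    rw [hCe]
    refine Measurable.iSup fun n => ?_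
    have hn : e n ∈ Icc (0:ℝ) T := by
      have : e n ∈ D := he ▸ ⟨n, rfl⟩
      exact ⟨ht.1.trans (hDsub this).1, (hDsub this).2⟩
    exact (((hXad _ hn).mono (ℱ.le _)).measurable).sub
      (((hMmart.1 _ hn).mono (ℱ.le _)).measurable)
  -- sandwich and integrability
  have hsand : ∀ t, t ∈ Icc (0:ℝ) T →
      ∀ᵐ ω ∂μ, X T ω - M T ω ≤ C t ω ∧ C t ω ≤ B t ω := by
    intro t ht
    filter_upwards [hbnd t ht] with ω hω
    have hbddA : BddAbove ((fun s => X s ω - M s ω) '' Icc t T) :=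
      ⟨B t ω, by rintro x ⟨u, hu, rfl⟩; exact hω u hu⟩
    constructor
    · rw [hCdef t ht ω]
      exact le_csSup hbddA (mem_image_of_mem _ ⟨ht.2, le_rfl⟩)
    · rw [hCdef t ht ω]
      exact csSup_le ⟨_, mem_image_of_mem _ (⟨ht.2, le_rfl⟩ : T ∈ Icc t T)⟩
        (by rintro x ⟨u, hu, rfl⟩; exact hω u hu)
  have hCint : ∀ t, t ∈ Icc (0:ℝ) T → Integrable (C t) μ := by
    intro t ht
    refine Integrable.mono'
      (((hXint T hTmem).abs.add (hMmart.2.1 T hTmem).abs).add (hBint t ht).abs)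
      ((hCmeas t ht).aestronglyMeasurable) ?_
    filter_upwards [hsand t ht] with ω ⟨h1, h2⟩
    rw [Real.norm_eq_abs, abs_le]
    simp only [Pi.add_apply]
    constructor
    · have := abs_le.mp (le_refl |X T ω|)
      have h3 : -(|X T ω| + |M T ω|) ≤ X T ω - M T ω := by
        have := neg_abs_le (X T ω); have := neg_abs_le (M T ω)
        have := le_abs_self (M T ω); linarith
      have h4 := neg_abs_le (B t ω)
      nlinarith [abs_nonneg (B t ω)]
    · have := le_abs_self (B t ω)
      nlinarith [abs_nonneg (X T ω), abs_nonneg (M T ω)]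
  -- the supermartingale Z
  set Z : ℝ → Ω → ℝ := fun s ω => M s ω + (μ[C s | ℱ s]) ω with hZdef
  have hZsuper : SupermartingaleOn ℱ μ Z T := by
    refine ⟨fun s hs => (hMmart.1 s hs).add stronglyMeasurable_condExp,
      fun s hs => (hMmart.2.1 s hs).add integrable_condExp, ?_⟩
    intro s t' hs ht' hst
    have hCle : C t' ≤ᵐ[μ] C s := by
      filter_upwards [hbnd s hs] with ω hω
      rw [hCdef t' ht' ω, hCdef s hs ω]
      refine csSup_le_csSup ⟨B s ω, ?_⟩
        ⟨_, mem_image_of_mem _ (⟨ht'.2, le_rfl⟩ : T ∈ Icc t' T)⟩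
        (image_mono (Icc_subset_Icc_left hst))
      rintro x ⟨u, hu, rfl⟩; exact hω u hu
    have h1 : μ[Z t' | ℱ s] =ᵐ[μ] fun ω => M s ω + (μ[C t' | ℱ s]) ω := by
      have he : Z t' = M t' + μ[C t' | ℱ t'] := rfl
      rw [he]
      calc μ[M t' + μ[C t' | ℱ t'] | ℱ s]
          =ᵐ[μ] μ[M t' | ℱ s] + μ[μ[C t' | ℱ t'] | ℱ s] :=
            condExp_add (hMmart.2.1 t' ht') integrable_condExp _
        _ =ᵐ[μ] fun ω => M s ω + (μ[C t' | ℱ s]) ω := by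
            filter_upwards [hMmart.2.2 s t' hs ht' hst,
              condExp_condExp_of_le (ℱ.mono hst) (ℱ.le t') (μ := μ) (f := C t')]
              with ω ha hb
            simp only [Pi.add_apply]; rw [ha, hb]
    have h2 : μ[C t' | ℱ s] ≤ᵐ[μ] μ[C s | ℱ s] :=
      condExp_mono (hCint t' ht') (hCint s hs) hCle
    filter_upwards [h1, h2] with ω ha hb
    rw [ha]
    exact add_le_add_right hb _
  have hZdom : ∀ s ∈ Icc (0:ℝ) T, ∀ᵐ ω ∂μ, X s ω ≤ Z s ω := by
    intro s hs
    have hφsm : StronglyMeasurable[ℱ s] (fun ω => X s ω - M s ω) :=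
      (hXad s hs).sub (hMmart.1 s hs)
    have hφint : Integrable (fun ω => X s ω - M s ω) μ :=
      (hXint s hs).sub (hMmart.2.1 s hs)
    have hφle : (fun ω => X s ω - M s ω) ≤ᵐ[μ] C s := by
      filter_upwards [hbnd s hs] with ω hω
      rw [hCdef s hs ω]
      exact le_csSup ⟨B s ω, by rintro x ⟨u, hu, rfl⟩; exact hω u hu⟩
        (mem_image_of_mem _ ⟨le_rfl, hs.2⟩)
    have hφeq : μ[(fun ω => X s ω - M s ω) | ℱ s] = fun ω => X s ω - M s ω :=
      condExp_of_stronglyMeasurable (ℱ.le s) hφsm hφint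
    have hmono : μ[(fun ω => X s ω - M s ω) | ℱ s] ≤ᵐ[μ] μ[C s | ℱ s] :=
      condExp_mono hφint (hCint s hs) hφle
    rw [hφeq] at hmono
    filter_upwards [hmono] with ω h
    simp only [hZdef]
    linarith
  -- conclude
  intro t ht
  have hBle : B t ≤ᵐ[μ] μ[C t | ℱ t] := by
    filter_upwards [hYmin Z hZsuper hZdom t ht, hDM t ht] with ω h1 h2
    simp only [hZdef] at h1
    linarith
  refine ⟨hsand t ht, hCint t ht, hBle, ?_⟩
  -- C t = B t a.e.
  have hCleB : C t ≤ᵐ[μ] B t := by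
    filter_upwards [hsand t ht] with ω h; exact h.2
  have hint1 : ∫ ω, B t ω ∂μ ≤ ∫ ω, (μ[C t | ℱ t]) ω ∂μ :=
    integral_mono_ae (hBint t ht) integrable_condExp hBle
  have hint2 : ∫ ω, (μ[C t | ℱ t]) ω ∂μ = ∫ ω, C t ω ∂μ :=
    integral_condExp (ℱ.le t)
  have hBCint : Integrable (fun ω => B t ω - C t ω) μ :=
    (hBint t ht).sub (hCint t ht)
  have hnn : 0 ≤ᵐ[μ] fun ω => B t ω - C t ω := by
    filter_upwards [hCleB] with ω h
    simp only [Pi.zero_apply]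
    linarith
  have hzero : ∫ ω, (B t ω - C t ω) ∂μ = 0 := by
    rw [integral_sub (hBint t ht) (hCint t ht)]
    have := hint2 ▸ hint1
    have h2 : ∫ ω, C t ω ∂μ ≤ ∫ ω, B t ω ∂μ :=
      integral_mono_ae (hCint t ht) (hBint t ht) hCleB
    linarith
  have := (integral_eq_zero_iff_of_nonneg_ae hnn hBCint).mp hzero
  filter_upwards [this] with ω h
  simp only [Pi.zero_apply] at h
  linarith
end

section
/- Suppose $\widehat{M}$ is a martingale with $\widehat{M}_0 = 0$ such that $\widehat{C}_t = \sup_{t \le s \le T}(X_s - \widehat{M}_s)$ is predictable, and set $\widehat{Y}_t = \widehat{M}_t + \widehat{C}_t$. Then $\widehat{Y}$ is a right-continuous supermartingale dominating $X$, and $\widehat{Y}_t = \widehat{M}_t + \widehat{C}_t$ is its Doob–Meyer decomposition. -/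
open Set Filter MeasureTheory
open scoped ENNReal NNReal

variable {Ω : Type*} {m0 : MeasurableSpace Ω}

/-- A càdlàg function is bounded on `[0,T]`. -/
lemma CadlagOn.exists_bound {f : ℝ → ℝ} {T : ℝ} (hf : CadlagOn f T) :
    ∃ B : ℝ, ∀ s ∈ Icc (0:ℝ) T, |f s| ≤ B := by
  rcases le_or_gt T 0 with hT | hT
  · refine ⟨|f 0|, fun s hs => ?_⟩
    have : s = 0 := le_antisymm (hs.2.trans hT) hs.1
    simp [this]
  · have key : ∀ t ∈ Icc (0:ℝ) T, ∃ (lo hi B : ℝ), lo < t ∧ t < hi ∧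
        ∀ s ∈ Ioo lo hi ∩ Icc 0 T, |f s| ≤ B := by
      intro t ht
      obtain ⟨hiR, BR, hthi, hR⟩ : ∃ hi B, t < hi ∧ ∀ s ∈ Ioo t hi ∩ Icc 0 T, |f s| ≤ B := by
        rcases lt_or_ge t T with h | h
        · have h2 : ∀ᶠ u in nhdsWithin t (Ioi t), f u ∈ Ioo (f t - 1) (f t + 1) :=
            hf.1 t ⟨ht.1, h⟩ (Ioo_mem_nhds (by linarith) (by linarith))
          rw [eventually_iff, mem_nhdsGT_iff_exists_Ioo_subset] at h2
          obtain ⟨u, hu, hsub⟩ := h2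
          refine ⟨u, |f t| + 1, hu, fun s hs => ?_⟩
          have h3 := hsub hs.1
          simp only [mem_setOf_eq, mem_Ioo] at h3
          have h4 := le_abs_self (f t)
          have h5 := neg_abs_le (f t)
          rw [abs_le]; constructor <;> linarith [h3.1, h3.2]
        · exact ⟨T + 1, 0, by linarith [ht.2], fun s hs =>
            (by linarith [hs.1.1, hs.2.2, h] : False).elim⟩
      obtain ⟨loL, BL, hlot, hL⟩ : ∃ lo B, lo < t ∧ ∀ s ∈ Ioo lo t ∩ Icc 0 T, |f s| ≤ B := by
        rcases lt_or_ge 0 t with h | h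
        · obtain ⟨l, hl⟩ := hf.2 t ⟨h, ht.2⟩
          have h2 : ∀ᶠ u in nhdsWithin t (Iio t), f u ∈ Ioo (l - 1) (l + 1) :=
            hl (Ioo_mem_nhds (by linarith) (by linarith))
          rw [eventually_iff, mem_nhdsLT_iff_exists_Ioo_subset] at h2
          obtain ⟨u, hu, hsub⟩ := h2
          refine ⟨u, |l| + 1, hu, fun s hs => ?_⟩
          have h3 := hsub hs.1
          simp only [mem_setOf_eq, mem_Ioo] at h3
          have h4 := le_abs_self l
          have h5 := neg_abs_le l
          rw [abs_le]; constructor <;> linarith [h3.1, h3.2]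
        · exact ⟨-1, 0, by linarith [ht.1], fun s hs =>
            (by linarith [hs.1.2, hs.2.1, h] : False).elim⟩
      refine ⟨loL, hiR, max BR (max BL |f t|), hlot, hthi, fun s hs => ?_⟩
      rcases lt_trichotomy s t with h | h | h
      · exact (hL s (Set.mem_inter (Set.mem_Ioo.2 ⟨hs.1.1, h⟩) hs.2)).trans
          ((le_max_left _ _).trans (le_max_right _ _))
      · rw [h]; exact (le_max_right _ _).trans (le_max_right _ _)
      · exact (hR s (Set.mem_inter (Set.mem_Ioo.2 ⟨h, hs.1.2⟩) hs.2)).trans (le_max_left _ _)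
    choose lo hi B hlo hhi hB using key
    have hcov : Icc (0:ℝ) T ⊆ ⋃ i : Icc (0:ℝ) T, Ioo (lo i i.2) (hi i i.2) := fun x hx =>
      mem_iUnion.2 ⟨⟨x, hx⟩, Set.mem_Ioo.2 ⟨hlo x hx, hhi x hx⟩⟩
    obtain ⟨F, hF⟩ := isCompact_Icc.elim_finite_subcover _
      (fun i : Icc (0:ℝ) T => isOpen_Ioo) hcov
    have hFne : F.Nonempty := by
      by_contra h
      rw [Finset.not_nonempty_iff_eq_empty] at h
      have := hF ⟨le_rfl, hT.le⟩
      simp [h] at this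
    refine ⟨F.sup' hFne (fun i => B i i.2), fun s hs => ?_⟩
    rcases mem_iUnion₂.1 (hF hs) with ⟨i, hiF, hsi⟩
    exact (hB i i.2 s ⟨hsi, hs⟩).trans (Finset.le_sup' (fun i : Icc (0:ℝ) T => B i i.2) hiF)

/-- The time-`t` slice of a predictable process is `ℱ t`-measurable. -/
lemma IsPredictable.slice {ℱ : Filtration ℝ m0} {Z : ℝ → Ω → ℝ}
    (hZ : IsPredictable ℱ Z) (t : ℝ) : Measurable[ℱ t] (Z t) := by
  have hφ : @Measurable Ω (ℝ × Ω) (ℱ t) (predictableSigma ℱ)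
      (fun ω => ((t, ω) : ℝ × Ω)) := by
    rw [predictableSigma]
    refine @measurable_generateFrom Ω (ℝ × Ω) (ℱ t) _ _ ?_
    rintro S (⟨a, b, A, hab, hA, rfl⟩ | ⟨A, hA, rfl⟩)
    · have : (fun ω => ((t, ω) : ℝ × Ω)) ⁻¹' (Ioc a b ×ˢ A) =
        if t ∈ Ioc a b then A else ∅ := by
        ext ω
        by_cases h : t ∈ Ioc a b <;> simp [Set.mem_prod, h]
      rw [this]
      split_ifs with h
      · exact ℱ.mono h.1.le _ hA
      · exact @MeasurableSet.empty Ω (ℱ t)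
    · have : (fun ω => ((t, ω) : ℝ × Ω)) ⁻¹' (({0} : Set ℝ) ×ˢ A) =
        if t = 0 then A else ∅ := by
        ext ω
        by_cases h : t = 0 <;> simp [Set.mem_prod, h, eq_comm]
      rw [this]
      split_ifs with h
      · subst h; exact hA
      · exact @MeasurableSet.empty Ω (ℱ t)
  exact hZ.comp hφ

/-- If `M̂` is a martingale with `M̂ 0 = 0` whose future-supremum process
`Ĉ t = sup_{t ≤ s ≤ T} (X s - M̂ s)` is predictable, then `Ŷ = M̂ + Ĉ` is a
right-continuous supermartingale dominating `X`, and `Ŷ = M̂ + Ĉ` is its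
Doob–Meyer decomposition (`Ĉ` being nonincreasing and predictable). -/
theorem predictable_futureSup_gives_supermartingale
    (μ : Measure Ω) [IsProbabilityMeasure μ] (ℱ : Filtration ℝ m0)
    (T : ℝ) (hT : 0 < T) (X U Mhat Chat Yhat : ℝ → Ω → ℝ)
    (hXad : ∀ t ∈ Icc (0:ℝ) T, StronglyMeasurable[ℱ t] (X t))
    (hXcadlag : ∀ ω, CadlagOn (fun t => X t ω) T)
    (hUmart : MartingaleOn ℱ μ U T)
    (hUnn : ∀ t ∈ Icc (0:ℝ) T, ∀ ω, 0 ≤ U t ω)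
    (hUui : UniformIntegrable (fun t : Icc (0:ℝ) T => U t) 1 μ)
    (hdom : ∀ t ∈ Icc (0:ℝ) T, ∀ ω, |X t ω| ≤ U t ω)
    (hMmart : MartingaleOn ℱ μ Mhat T) (hM0 : ∀ ω, Mhat 0 ω = 0)
    (hMcadlag : ∀ ω, CadlagOn (fun t => Mhat t ω) T)
    (hMui : UniformIntegrable (fun t : Icc (0:ℝ) T => Mhat t) 1 μ)
    (hCdef : ∀ t ∈ Icc (0:ℝ) T, ∀ ω,
      Chat t ω = sSup ((fun s => X s ω - Mhat s ω) '' Icc t T))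
    (hCpred : IsPredictable ℱ Chat)
    (hYdef : ∀ t ∈ Icc (0:ℝ) T, ∀ ω, Yhat t ω = Mhat t ω + Chat t ω) :
    SupermartingaleOn ℱ μ Yhat T ∧
      (∀ t ∈ Icc (0:ℝ) T, ∀ᵐ ω ∂μ, X t ω ≤ Yhat t ω) ∧
      (∀ ω, AntitoneOn (fun t => Chat t ω) (Icc 0 T)) ∧
      ∀ ω, ∀ t ∈ Ico (0:ℝ) T,
        Tendsto (fun u => Yhat u ω) (nhdsWithin t (Ioi t)) (nhds (Yhat t ω)) := by
  classical
  have hTmem : T ∈ Icc (0:ℝ) T := ⟨hT.le, le_rfl⟩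
  have h0mem : (0:ℝ) ∈ Icc (0:ℝ) T := ⟨le_rfl, hT.le⟩
  set Z : ℝ → Ω → ℝ := fun s ω => X s ω - Mhat s ω with hZdef
  have hCdef' : ∀ t ∈ Icc (0:ℝ) T, ∀ ω,
      Chat t ω = sSup ((fun s => Z s ω) '' Icc t T) := hCdef
  have hZcad : ∀ ω, CadlagOn (fun s => Z s ω) T := by
    intro ω
    refine ⟨fun t ht => ((hXcadlag ω).1 t ht).sub ((hMcadlag ω).1 t ht), fun t ht => ?_⟩
    obtain ⟨l1, h1⟩ := (hXcadlag ω).2 t ht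
    obtain ⟨l2, h2⟩ := (hMcadlag ω).2 t ht
    exact ⟨l1 - l2, h1.sub h2⟩
  have hbddA : ∀ ω, ∀ a ∈ Icc (0:ℝ) T, BddAbove ((fun s => Z s ω) '' Icc a T) := by
    intro ω a ha
    obtain ⟨B, hB⟩ := (hZcad ω).exists_bound
    refine ⟨B, ?_⟩
    rintro z ⟨s, hs, rfl⟩
    exact (le_abs_self _).trans (hB s ⟨ha.1.trans hs.1, hs.2⟩)
  -- Z s ≤ Chat t pointwise for s ∈ [t,T]
  have hZleC : ∀ t ∈ Icc (0:ℝ) T, ∀ s ∈ Icc t T, ∀ ω, Z s ω ≤ Chat t ω := by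
    intro t ht s hs ω
    rw [hCdef' t ht ω]
    exact le_csSup (hbddA ω t ht) ⟨s, hs, rfl⟩
  -- Chat is (pathwise) antitone
  have hCanti : ∀ ω, AntitoneOn (fun t => Chat t ω) (Icc 0 T) := by
    intro ω a ha b hb hab
    simp only
    rw [hCdef' a ha ω, hCdef' b hb ω]
    exact csSup_le_csSup (hbddA ω a ha) ⟨Z b ω, ⟨b, ⟨le_rfl, hb.2⟩, rfl⟩⟩
      (image_mono (Icc_subset_Icc_left hab))
  have hCT : ∀ ω, Chat T ω = Z T ω := by
    intro ω
    rw [hCdef' T hTmem ω, Icc_self, image_singleton, csSup_singleton]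
  have hCF : ∀ t, Measurable[ℱ t] (Chat t) := fun t => hCpred.slice t
  have hCm : ∀ t, Measurable (Chat t) := fun t => (hCF t).mono (ℱ.le t) le_rfl
  have hZm : ∀ s ∈ Icc (0:ℝ) T, Measurable[ℱ s] (Z s) := fun s hs =>
    ((hXad s hs).measurable.sub (hMmart.1 s hs).measurable)
  have hZm0 : ∀ s ∈ Icc (0:ℝ) T, Measurable (Z s) := fun s hs =>
    (hZm s hs).mono (ℱ.le s) le_rfl
  -- the dominating submartingale V
  set V : ℝ → Ω → ℝ := fun s ω => U s ω + |Mhat s ω| with hVdef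
  have hVint : ∀ s ∈ Icc (0:ℝ) T, Integrable (V s) μ := fun s hs =>
    (hUmart.2.1 s hs).add (hMmart.2.1 s hs).abs
  have hVnn : ∀ s ∈ Icc (0:ℝ) T, ∀ ω, 0 ≤ V s ω := fun s hs ω =>
    add_nonneg (hUnn s hs ω) (abs_nonneg _)
  have hZV : ∀ s ∈ Icc (0:ℝ) T, ∀ ω, |Z s ω| ≤ V s ω := by
    intro s hs ω
    have h1 := abs_le.1 (hdom s hs ω)
    have h2 := le_abs_self (Mhat s ω)
    have h3 := neg_abs_le (Mhat s ω)
    rw [abs_le]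
    constructor <;> simp only [hZdef, hVdef] <;> linarith
  -- V is dominated by the conditional expectation of V T
  have hVsub : ∀ s ∈ Icc (0:ℝ) T, V s ≤ᵐ[μ] μ[V T | ℱ s] := by
    intro s hs
    have hPi : V T = U T + fun ω => |Mhat T ω| := rfl
    have hU := hUmart.2.2 s T hs hTmem hs.2
    have hM := hMmart.2.2 s T hs hTmem hs.2
    have habs1 : μ[Mhat T | ℱ s] ≤ᵐ[μ] μ[(fun ω => |Mhat T ω|) | ℱ s] :=
      condExp_mono (hMmart.2.1 T hTmem) (hMmart.2.1 T hTmem).abs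
        (Eventually.of_forall fun ω => le_abs_self _)
    have habs2 : -μ[Mhat T | ℱ s] ≤ᵐ[μ] μ[(fun ω => |Mhat T ω|) | ℱ s] := by
      have hneg : μ[-Mhat T | ℱ s] =ᵐ[μ] -μ[Mhat T | ℱ s] := condExp_neg _ _
      have := condExp_mono (m := ℱ s) (hMmart.2.1 T hTmem).neg (hMmart.2.1 T hTmem).abs
        (Eventually.of_forall fun ω => neg_le_abs (Mhat T ω))
      filter_upwards [hneg, this] with ω h1 h2
      rw [← h1]
      exact h2
    have hadd : μ[V T | ℱ s] =ᵐ[μ]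
        μ[U T | ℱ s] + μ[(fun ω => |Mhat T ω|) | ℱ s] := by
      rw [hPi]
      exact condExp_add (hUmart.2.1 T hTmem) (hMmart.2.1 T hTmem).abs _
    filter_upwards [hU, hM, habs1, habs2, hadd] with ω h1 h2 h3 h4 h5
    have : |Mhat s ω| ≤ (μ[(fun ω => |Mhat T ω|) | ℱ s]) ω := by
      rw [← h2] at *
      rcases abs_cases ((μ[Mhat T | ℱ s]) ω) with ⟨he, _⟩ | ⟨he, _⟩
      · rw [he]; exact h3
      · rw [he]; exact h4
    rw [h5]; simp only [hVdef, Pi.add_apply]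
    linarith [h1, this]
  -- enumeration of a dense set of grid points
  set e : ℕ → ℝ := fun n =>
    if (((Denumerable.eqv ℚ).symm n : ℚ) : ℝ) ∈ Icc (0:ℝ) T
      then (((Denumerable.eqv ℚ).symm n : ℚ) : ℝ) else T with hedef
  have hemem : ∀ n, e n ∈ Icc (0:ℝ) T := by
    intro n
    simp only [hedef]
    split_ifs with h
    exacts [h, hTmem]
  have heq : ∀ q : ℚ, (q:ℝ) ∈ Icc (0:ℝ) T → ∃ n, e n = (q:ℝ) := by
    intro q hq
    refine ⟨Denumerable.eqv ℚ q, ?_⟩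
    simp only [hedef]
    rw [Equiv.symm_apply_apply, if_pos hq]
  set grid : ℕ → Finset ℝ := fun N => insert T ((Finset.range (N+1)).image e) with hgdef
  have hgridmem : ∀ N, ∀ s ∈ grid N, s ∈ Icc (0:ℝ) T := by
    intro N s hs
    rcases Finset.mem_insert.1 hs with rfl | hs
    · exact hTmem
    · obtain ⟨n, _, rfl⟩ := Finset.mem_image.1 hs
      exact hemem n
  have hgridne : ∀ N, (grid N).Nonempty := fun N => ⟨T, Finset.mem_insert_self _ _⟩
  have hgridT : ∀ N, T ∈ grid N := fun N => Finset.mem_insert_self _ _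
  have hgridmono : ∀ N, grid N ⊆ grid (N+1) := fun N =>
    Finset.insert_subset_insert _ (Finset.image_subset_image
      (Finset.range_subset_range.2 (by omega)))
  have hgride : ∀ n, e n ∈ grid n := fun n => Finset.mem_insert_of_mem
    (Finset.mem_image_of_mem e (Finset.mem_range.2 (by omega)))
  -- running grid maxima
  set MM : ℕ → Ω → ℝ := fun N ω => (grid N).sup' (hgridne N) (fun s => Z s ω) with hMMdef
  have hMMmono : ∀ ω, Monotone (fun N => MM N ω) := by
    intro ω
    apply monotone_nat_of_le_succ
    intro N
    exact Finset.sup'_mono _ (hgridmono N) (hgridne N)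
  have hMMleC : ∀ N ω, MM N ω ≤ Chat 0 ω := by
    intro N ω
    apply Finset.sup'_le
    intro s hs
    exact hZleC 0 h0mem s ⟨(hgridmem N s hs).1, (hgridmem N s hs).2⟩ ω
  have hMMtend : ∀ ω, Tendsto (fun N => MM N ω) atTop (nhds (Chat 0 ω)) := by
    intro ω
    have hbdd : BddAbove (Set.range fun N => MM N ω) := by
      refine ⟨Chat 0 ω, ?_⟩
      rintro _ ⟨N, rfl⟩
      exact hMMleC N ω
    have h1 := tendsto_atTop_ciSup (hMMmono ω) hbdd
    have hZgridle : ∀ N, ∀ s ∈ grid N, Z s ω ≤ ⨆ N, MM N ω := fun N s hs =>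
      (Finset.le_sup' (fun s => Z s ω) hs).trans (le_ciSup hbdd N)
    have h2 : ⨆ N, MM N ω = Chat 0 ω := by
      refine le_antisymm (ciSup_le fun N => hMMleC N ω) ?_
      rw [hCdef' 0 h0mem ω]
      refine csSup_le ((nonempty_Icc.2 hT.le).image _) ?_
      rintro z ⟨s, hs, rfl⟩
      by_contra hcon
      push_neg at hcon
      rcases eq_or_lt_of_le hs.2 with rfl | hsT
      · exact absurd (hZgridle 0 s (hgridT 0)) (not_le.2 hcon)
      · have hrc := (hZcad ω).1 s ⟨hs.1, hsT⟩
        have hev : ∀ᶠ u in nhdsWithin s (Ioi s), Z u ω ∈ Ioi (⨆ N, MM N ω) :=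
          hrc (Ioi_mem_nhds hcon)
        rw [eventually_iff, mem_nhdsGT_iff_exists_Ioo_subset] at hev
        obtain ⟨u₀, hu₀, hsub⟩ := hev
        obtain ⟨q, hq1, hq2⟩ := exists_rat_btwn (lt_min hu₀ hsT)
        have hqI : (q:ℝ) ∈ Icc (0:ℝ) T :=
          ⟨hs.1.trans hq1.le, (hq2.trans_le (min_le_right _ _)).le⟩
        obtain ⟨n, hn⟩ := heq q hqI
        have hgt : Z (q:ℝ) ω > ⨆ N, MM N ω :=
          hsub ⟨hq1, hq2.trans_le (min_le_left _ _)⟩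
        have hle : Z (q:ℝ) ω ≤ ⨆ N, MM N ω := by
          rw [← hn]
          exact hZgridle n (e n) (hgride n)
        exact absurd hle (not_le.2 hgt)
    rwa [h2] at h1
  -- the adapted quasi-argmax times
  set Qual : ℕ → Ω → Finset ℝ :=
    fun N ω => (grid N).filter (fun s => Chat s ω - 1 ≤ Z s ω) with hQdef
  have hQne : ∀ N ω, (Qual N ω).Nonempty := fun N ω =>
    ⟨T, Finset.mem_filter.2 ⟨hgridT N, by rw [hCT ω]; linarith⟩⟩
  set α : ℕ → Ω → ℝ := fun N ω => (Qual N ω).min' (hQne N ω) with hadef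
  have hαqual' : ∀ N ω, α N ω ∈ Qual N ω := fun N ω => (Qual N ω).min'_mem (hQne N ω)
  have hαgrid : ∀ N ω, α N ω ∈ grid N := fun N ω =>
    (Finset.mem_filter.1 (hαqual' N ω)).1
  have hαmem : ∀ N ω, α N ω ∈ Icc (0:ℝ) T := fun N ω => hgridmem N _ (hαgrid N ω)
  have hαqual : ∀ N ω, Chat (α N ω) ω - 1 ≤ Z (α N ω) ω := fun N ω =>
    (Finset.mem_filter.1 (hαqual' N ω)).2
  -- the key pathwise bound
  have hkey : ∀ N ω, MM N ω ≤ max (Chat 0 ω - 1) (Z (α N ω) ω + 1) := by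
    intro N ω
    obtain ⟨κ, hκg, hκeq⟩ := Finset.exists_mem_eq_sup' (hgridne N) (fun s => Z s ω)
    have hκI := hgridmem N κ hκg
    rcases lt_or_ge κ (α N ω) with h | h
    · have hκnq : κ ∉ Qual N ω := fun hmem =>
        absurd (Finset.min'_le _ κ hmem) (not_le.2 h)
      have hlt : Z κ ω < Chat κ ω - 1 := by
        by_contra hcon
        push_neg at hcon
        exact hκnq (Finset.mem_filter.2 ⟨hκg, hcon⟩)
      have hCle : Chat κ ω ≤ Chat 0 ω := hCanti ω h0mem hκI hκI.1
      refine le_trans ?_ (le_max_left _ _)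
      have hMMeq : MM N ω = Z κ ω := hκeq
      rw [hMMeq]
      linarith
    · have hZκ : Z κ ω ≤ Chat (α N ω) ω := hZleC (α N ω) (hαmem N ω) κ ⟨h, hκI.2⟩ ω
      refine le_trans ?_ (le_max_right _ _)
      have hMMeq : MM N ω = Z κ ω := hκeq
      rw [hMMeq]
      linarith [hαqual N ω]
  -- the events {α N = s} and their measurability
  set Aev : ℕ → ℝ → Set Ω := fun N s => {ω | α N ω = s} with hAdef
  have hAmem : ∀ N s ω, ω ∈ Aev N s ↔ α N ω = s := fun N s ω => Iff.rfl
  have hAmeasF : ∀ N, ∀ s ∈ grid N, MeasurableSet[ℱ s] (Aev N s) := by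
    intro N s hsg
    have hsI := hgridmem N s hsg
    have e2 : Aev N s =
        {ω | Chat s ω - 1 ≤ Z s ω} ∩
          ⋂ s' ∈ ((grid N).filter (· < s) : Finset ℝ),
            {ω | Chat s' ω - 1 ≤ Z s' ω}ᶜ := by
      ext ω
      simp only [hAmem, mem_inter_iff, mem_setOf_eq, mem_iInter, Finset.mem_coe,
        Finset.mem_filter, mem_compl_iff]
      constructor
      · rintro rfl
        refine ⟨hαqual N ω, ?_⟩
        rintro s' ⟨hs'g, hs'lt⟩ hq
        have hmem : s' ∈ Qual N ω := Finset.mem_filter.2 ⟨hs'g, hq⟩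
        exact absurd (Finset.min'_le (Qual N ω) s' hmem) (not_le.2 hs'lt)
      · rintro ⟨h1, h2⟩
        have hmem : s ∈ Qual N ω := Finset.mem_filter.2 ⟨hsg, h1⟩
        refine le_antisymm (Finset.min'_le (Qual N ω) s hmem) ?_
        apply Finset.le_min'
        intro y hy
        have hyf := Finset.mem_filter.1 hy
        by_contra hcon
        push_neg at hcon
        exact h2 y ⟨hyf.1, hcon⟩ hyf.2
    rw [e2]
    apply MeasurableSet.inter
    · exact @measurableSet_le ℝ Ω _ _ _ (ℱ s) _ _ _ _ _
        ((hCF s).sub measurable_const) (hZm s hsI)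
    · apply MeasurableSet.biInter (Finset.countable_toSet _)
      intro s' hs'
      have hs'f := Finset.mem_filter.1 hs'
      have hs'I := hgridmem N s' hs'f.1
      have hlt : s' < s := hs'f.2
      have : MeasurableSet[ℱ s'] {ω | Chat s' ω - 1 ≤ Z s' ω}ᶜ :=
        (@measurableSet_le ℝ Ω _ _ _ (ℱ s') _ _ _ _ _
          ((hCF s').sub measurable_const) (hZm s' hs'I)).compl
      exact ℱ.mono hlt.le _ this
  have hAmeas : ∀ N, ∀ s ∈ grid N, MeasurableSet (Aev N s) := fun N s hs =>
    ℱ.le s _ (hAmeasF N s hs)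
  -- partition identity
  have hApart : ∀ N ω (g : ℝ → Ω → ℝ),
      ∑ s ∈ grid N, Set.indicator (Aev N s) (g s) ω = g (α N ω) ω := by
    intro N ω g
    rw [Finset.sum_eq_single_of_mem (α N ω) (hαgrid N ω)]
    · exact Set.indicator_of_mem (show ω ∈ Aev N (α N ω) from rfl) (g (α N ω))
    · intro b hb hne
      exact Set.indicator_of_notMem (fun h => hne ((hAmem N b ω).1 h).symm) _
  -- integrability of V ∘ α
  have hWrep : ∀ N, (fun ω => V (α N ω) ω) =
      fun ω => ∑ s ∈ grid N, Set.indicator (Aev N s) (V s) ω :=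
    fun N => funext fun ω => (hApart N ω V).symm
  have hWint : ∀ N, Integrable (fun ω => V (α N ω) ω) μ := by
    intro N
    rw [hWrep N]
    exact integrable_finset_sum _ fun s hs =>
      (hVint s (hgridmem N s hs)).indicator (hAmeas N s hs)
  -- discrete optional sampling bound
  have hWbound : ∀ N, ∫ ω, V (α N ω) ω ∂μ ≤ ∫ ω, V T ω ∂μ := by
    intro N
    rw [hWrep N, integral_finset_sum _ (fun s hs =>
      (hVint s (hgridmem N s hs)).indicator (hAmeas N s hs))]
    have h1 : ∀ s ∈ grid N,
        ∫ ω, Set.indicator (Aev N s) (V s) ω ∂μ ≤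
          ∫ ω, Set.indicator (Aev N s) (V T) ω ∂μ := by
      intro s hs
      rw [integral_indicator (hAmeas N s hs), integral_indicator (hAmeas N s hs)]
      calc ∫ ω in Aev N s, V s ω ∂μ
          ≤ ∫ ω in Aev N s, (μ[V T | ℱ s]) ω ∂μ :=
            setIntegral_mono_ae (hVint s (hgridmem N s hs)).integrableOn
              integrable_condExp.integrableOn (hVsub s (hgridmem N s hs))
        _ = ∫ ω in Aev N s, V T ω ∂μ :=
            setIntegral_condExp (ℱ.le s) (hVint T hTmem) (hAmeasF N s hs)
    calc ∑ s ∈ grid N, ∫ ω, Set.indicator (Aev N s) (V s) ω ∂μ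
        ≤ ∑ s ∈ grid N, ∫ ω, Set.indicator (Aev N s) (V T) ω ∂μ :=
          Finset.sum_le_sum h1
      _ = ∫ ω, ∑ s ∈ grid N, Set.indicator (Aev N s) (V T) ω ∂μ :=
          (integral_finset_sum _ (fun s hs =>
            (hVint T hTmem).indicator (hAmeas N s hs))).symm
      _ = ∫ ω, V T ω ∂μ := by
          congr 1
          funext ω
          exact hApart N ω (fun _ => V T)
  -- lintegral bound for the quasi-argmax values
  set K : ENNReal := ENNReal.ofReal (∫ ω, V T ω ∂μ) + 1 with hKdef
  have hψmeas : ∀ N, Measurable (fun ω => ENNReal.ofReal (Z (α N ω) ω + 1)) := by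
    intro N
    have hrep : (fun ω => Z (α N ω) ω + 1) =
        fun ω => ∑ s ∈ grid N, Set.indicator (Aev N s) (fun ω' => Z s ω' + 1) ω :=
      funext fun ω => (hApart N ω (fun s ω' => Z s ω' + 1)).symm
    apply ENNReal.measurable_ofReal.comp
    rw [hrep]
    exact Finset.measurable_sum _ fun s hs =>
      (((hZm0 s (hgridmem N s hs)).add_const 1).indicator (hAmeas N s hs))
  have hψbd : ∀ N, ∫⁻ ω, ENNReal.ofReal (Z (α N ω) ω + 1) ∂μ ≤ K := by
    intro N
    have hle : ∀ ω, ENNReal.ofReal (Z (α N ω) ω + 1) ≤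
        ENNReal.ofReal (V (α N ω) ω + 1) := fun ω =>
      ENNReal.ofReal_le_ofReal (by
        have := hZV (α N ω) (hαmem N ω) ω
        have h2 := le_abs_self (Z (α N ω) ω)
        linarith)
    calc ∫⁻ ω, ENNReal.ofReal (Z (α N ω) ω + 1) ∂μ
        ≤ ∫⁻ ω, ENNReal.ofReal (V (α N ω) ω + 1) ∂μ := lintegral_mono hle
      _ = ENNReal.ofReal (∫ ω, (V (α N ω) ω + 1) ∂μ) :=
          (ofReal_integral_eq_lintegral_ofReal ((hWint N).add (integrable_const 1))
            (Eventually.of_forall fun ω => by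
              simp only [Pi.add_apply, Pi.zero_apply]
              have := hVnn (α N ω) (hαmem N ω) ω
              linarith)).symm
      _ ≤ K := by
          rw [integral_add (hWint N) (integrable_const 1), integral_const,
            probReal_univ, smul_eq_mul, one_mul]
          rw [hKdef]
          rw [ENNReal.ofReal_add (integral_nonneg fun ω => hVnn _ (hαmem N ω) ω)
            zero_le_one, ENNReal.ofReal_one]
          exact add_le_add_left (ENNReal.ofReal_le_ofReal (hWbound N)) 1
  -- the liminf bound
  have hCfin : ∫⁻ ω, ENNReal.ofReal (Chat 0 ω) ∂μ ≤ K := by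
    have hptw : ∀ ω, ENNReal.ofReal (Chat 0 ω) ≤
        liminf (fun N => ENNReal.ofReal (Z (α N ω) ω + 1)) atTop := by
      intro ω
      have h1 : Tendsto (fun N => ENNReal.ofReal (MM N ω)) atTop
          (nhds (ENNReal.ofReal (Chat 0 ω))) :=
        (ENNReal.continuous_ofReal.continuousAt).tendsto.comp (hMMtend ω)
      rw [← h1.liminf_eq]
      have hev : ∀ᶠ N in atTop, Chat 0 ω - 1 < MM N ω :=
        (hMMtend ω).eventually (eventually_gt_nhds (by linarith))
      have hev2 : ∀ᶠ N in atTop, ENNReal.ofReal (MM N ω) ≤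
          ENNReal.ofReal (Z (α N ω) ω + 1) := by
        filter_upwards [hev] with N hN
        have hk := hkey N ω
        rcases le_max_iff.1 hk with h | h
        · exact absurd hN (not_lt.2 h)
        · exact ENNReal.ofReal_le_ofReal h
      exact liminf_le_liminf hev2
    calc ∫⁻ ω, ENNReal.ofReal (Chat 0 ω) ∂μ
        ≤ ∫⁻ ω, liminf (fun N => ENNReal.ofReal (Z (α N ω) ω + 1)) atTop ∂μ :=
          lintegral_mono hptw
      _ ≤ liminf (fun N => ∫⁻ ω, ENNReal.ofReal (Z (α N ω) ω + 1) ∂μ) atTop :=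
          lintegral_liminf_le hψmeas
      _ ≤ K := by
          refine le_trans (liminf_le_liminf (Eventually.of_forall hψbd)) ?_
          rw [liminf_const]
  -- integrability of Chat 0
  have hCint0 : Integrable (Chat 0) μ := by
    refine ⟨((hCm 0).stronglyMeasurable).aestronglyMeasurable, ?_⟩
    have hbound : ∀ ω, (‖Chat 0 ω‖₊ : ℝ≥0∞) ≤
        ENNReal.ofReal (Chat 0 ω) + ENNReal.ofReal (V T ω) := by
      intro ω
      rw [← enorm_eq_nnnorm, Real.enorm_eq_ofReal_abs]
      rcases le_total 0 (Chat 0 ω) with h | h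
      · rw [abs_of_nonneg h]
        exact le_add_right le_rfl
      · rw [abs_of_nonpos h]
        have h1 : Z T ω ≤ Chat 0 ω := hZleC 0 h0mem T hTmem ω
        have h2 : -Chat 0 ω ≤ V T ω := by
          have h3 := hZV T hTmem ω
          have h4 := neg_abs_le (Z T ω)
          linarith
        exact le_add_left (ENNReal.ofReal_le_ofReal h2)
    rw [HasFiniteIntegral]
    calc ∫⁻ ω, (‖Chat 0 ω‖₊ : ℝ≥0∞) ∂μ
        ≤ ∫⁻ ω, (ENNReal.ofReal (Chat 0 ω) + ENNReal.ofReal (V T ω)) ∂μ :=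
          lintegral_mono hbound
      _ = ∫⁻ ω, ENNReal.ofReal (Chat 0 ω) ∂μ + ∫⁻ ω, ENNReal.ofReal (V T ω) ∂μ :=
          lintegral_add_left (ENNReal.measurable_ofReal.comp (hCm 0)) _
      _ ≤ K + ENNReal.ofReal (∫ ω, V T ω ∂μ) := by
          apply add_le_add hCfin
          rw [ofReal_integral_eq_lintegral_ofReal (hVint T hTmem)
            (Eventually.of_forall fun ω => hVnn T hTmem ω)]
      _ < ⊤ := by
          rw [hKdef]
          exact ENNReal.add_lt_top.2 ⟨ENNReal.add_lt_top.2
            ⟨ENNReal.ofReal_lt_top, ENNReal.one_lt_top⟩, ENNReal.ofReal_lt_top⟩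
  -- integrability of Chat t for all t
  have hCint : ∀ t ∈ Icc (0:ℝ) T, Integrable (Chat t) μ := by
    intro t ht
    refine Integrable.mono' (hCint0.abs.add (hVint T hTmem))
      ((hCm t).aestronglyMeasurable) (Eventually.of_forall fun ω => ?_)
    have h1 : Chat t ω ≤ Chat 0 ω := hCanti ω h0mem ht ht.1
    have h2 : Z T ω ≤ Chat t ω := hZleC t ht T ⟨ht.2, le_rfl⟩ ω
    have h3 := hZV T hTmem ω
    have h4 := neg_abs_le (Z T ω)
    have h5 := le_abs_self (Chat 0 ω)
    have h6 := abs_nonneg (Z T ω)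
    have h7 := abs_nonneg (Chat 0 ω)
    simp only [Real.norm_eq_abs, Pi.add_apply]
    rw [abs_le]
    constructor <;> linarith
  -- Yhat as a function
  have hYeq : ∀ t ∈ Icc (0:ℝ) T, Yhat t = Mhat t + Chat t := fun t ht =>
    funext fun ω => hYdef t ht ω
  refine ⟨⟨?_, ?_, ?_⟩, ?_, hCanti, ?_⟩
  · -- adaptedness
    intro t ht
    rw [hYeq t ht]
    exact (hMmart.1 t ht).add ((hCF t).stronglyMeasurable)
  · -- integrability
    intro t ht
    rw [hYeq t ht]
    exact (hMmart.2.1 t ht).add (hCint t ht)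
  · -- supermartingale inequality
    intro s t hs ht hst
    rw [hYeq t ht, hYeq s hs]
    have h1 := condExp_add (hMmart.2.1 t ht) (hCint t ht) (ℱ s)
    have h2 := hMmart.2.2 s t hs ht hst
    have h3 : μ[Chat t | ℱ s] ≤ᵐ[μ] μ[Chat s | ℱ s] :=
      condExp_mono (hCint t ht) (hCint s hs)
        (Eventually.of_forall fun ω => hCanti ω hs ht hst)
    have h4 : μ[Chat s | ℱ s] = Chat s :=
      condExp_of_stronglyMeasurable (ℱ.le s) ((hCF s).stronglyMeasurable) (hCint s hs)
    rw [h4] at h3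
    filter_upwards [h1, h2, h3] with ω hω1 hω2 hω3
    rw [hω1]
    simp only [Pi.add_apply]
    rw [hω2]
    linarith
  · -- domination
    intro t ht
    refine Eventually.of_forall fun ω => ?_
    rw [hYdef t ht ω]
    have := hZleC t ht t ⟨le_rfl, ht.2⟩ ω
    simp only [hZdef] at this
    linarith
  · -- right continuity
    intro ω t ht
    have htI : t ∈ Icc (0:ℝ) T := ⟨ht.1, ht.2.le⟩
    have hIoo : Ioo t T ∈ nhdsWithin t (Ioi t) :=
      Ioo_mem_nhdsGT_of_mem ⟨le_rfl, ht.2⟩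
    have hCrc : Tendsto (fun u => Chat u ω) (nhdsWithin t (Ioi t))
        (nhds (Chat t ω)) := by
      rw [tendsto_order]
      constructor
      · intro a ha
        have ha' : a < sSup ((fun s => Z s ω) '' Icc t T) := by
          rwa [hCdef' t htI ω] at ha
        obtain ⟨z, ⟨s, hsmem, rfl⟩, hz⟩ := exists_lt_of_lt_csSup
          (((nonempty_Icc.2 htI.2).image _)) ha'
        rcases eq_or_lt_of_le hsmem.1 with heq | hlt
        · have hZrc := (hZcad ω).1 t ⟨ht.1, ht.2⟩
          have hz' : a < Z t ω := by rwa [← heq] at hz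
          have hev : ∀ᶠ u in nhdsWithin t (Ioi t), a < Z u ω :=
            hZrc (Ioi_mem_nhds hz')
          filter_upwards [hev, hIoo] with u hu1 hu2
          exact hu1.trans_le (hZleC u ⟨ht.1.trans hu2.1.le, hu2.2.le⟩ u
            ⟨le_rfl, hu2.2.le⟩ ω)
        · filter_upwards [Ioo_mem_nhdsGT_of_mem (⟨le_rfl, hlt⟩ : t ∈ Ico t s)]
            with u hu
          have huI : u ∈ Icc (0:ℝ) T := ⟨ht.1.trans hu.1.le, hu.2.le.trans hsmem.2⟩
          exact hz.trans_le (hZleC u huI s ⟨hu.2.le, hsmem.2⟩ ω)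
      · intro a ha
        filter_upwards [hIoo] with u hu
        have huI : u ∈ Icc (0:ℝ) T := ⟨ht.1.trans hu.1.le, hu.2.le⟩
        exact (hCanti ω htI huI hu.1.le).trans_lt ha
    have hMrc := (hMcadlag ω).1 t ht
    have hsum : Tendsto (fun u => Mhat u ω + Chat u ω) (nhdsWithin t (Ioi t))
        (nhds (Mhat t ω + Chat t ω)) := hMrc.add hCrc
    rw [hYdef t htI ω]
    refine Tendsto.congr' ?_ hsum
    filter_upwards [hIoo] with u hu
    exact (hYdef u ⟨ht.1.trans hu.1.le, hu.2.le⟩ ω).symm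
end

section
/- In the setting of the uniqueness proof: let $\widehat{M}$ be a martingale with $\widehat{M}_0 = 0$ such that $\widehat{C}_t = \sup_{t \le s \le T}(X_s - \widehat{M}_s)$ is predictable, and let $\widehat{Y} = \widehat{M} + \widehat{C}$. Then the pathwise flat-off condition holds: $\int_0^T \mathbf{1}_{\{\widehat{Y}_{s-} > X_{s-}\}}\, d\widehat{C}_s = 0$ almost surely, i.e., the nonincreasing process $\widehat{C}$ decreases only at times $s$ where $\widehat{Y}_{s-} = X_{s-}$. -/
/-!
Fix `ω` and put `g = X - M̂`, so that `Ĉ` is the future supremum of `g`. If `g` has a smaller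
left limit at `s` than `Ĉ`, then just left of `s` the path `g` stays below a level `m` that `Ĉ`
exceeds, so the supremum over `[t, T]` is realised on `[s, T]` and `Ĉ` is constant on `(t, s]`.
Hence every point of the set carries a left interval not charged by `dĈ`. A set of reals with this
property is null: the union `W` of these open intervals is a countable union by Lindelöf, and the
points of the set outside `W` are isolated on the left within it, hence countable.
-/

open Set Filter MeasureTheory

variable {Ω : Type*} {m0 : MeasurableSpace Ω}

theorem measure_eq_zero_of_forall_exists_measure_Ioc_eq_zero {α : Type*} [LinearOrder α]
    [TopologicalSpace α] [OrderTopology α] [SecondCountableTopology α] [MeasurableSpace α]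
    (μ : Measure α) {A : Set α} (h : ∀ x ∈ A, ∃ y < x, μ (Ioc y x) = 0) : μ A = 0 := by
  choose! y hyx hy using h
  set W := ⋃ x ∈ A, Ioo (y x) x with hW_def
  have hW : μ W = 0 := by
    obtain ⟨S, hSA, hSc, hSW⟩ :=
      TopologicalSpace.isOpen_biUnion_countable A (fun x => Ioo (y x) x) fun _ _ => isOpen_Ioo
    rw [hW_def, ← hSW, measure_biUnion_null_iff hSc]
    exact fun x hx => measure_mono_null Ioo_subset_Ioc_self (hy x (hSA hx))
  have hAW : (A \ W).Countable := by
    refine countable_setOfPred_isolated_left_within.mono fun x hx => mem_sep hx ?_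
    rw [← empty_mem_iff_bot]
    refine mem_nhdsWithin.2 ⟨Ioi (y x), isOpen_Ioi, hyx x hx.1, ?_⟩
    rintro z ⟨hzy, ⟨_, hzW⟩, hzx⟩
    exact hzW (mem_biUnion hx.1 ⟨hzy, hzx⟩)
  have hAW_null : μ (A \ W) = 0 := by
    rw [← biUnion_of_singleton (A \ W), measure_biUnion_null_iff hAW]
    intro x hx
    exact measure_mono_null (singleton_subset_iff.2 (right_mem_Ioc.2 (hyx x hx.1))) (hy x hx.1)
  exact measure_mono_null (fun x hx => by by_cases hxW : x ∈ W <;> simp [hx, hxW])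
    (measure_union_null hW hAW_null)

-- If `g` is unbounded above on `[s, T]`, both suprema are the junk value `0`.
theorem sSup_image_Icc_eq_of_forall_Ico_le {g : ℝ → ℝ} {t s T m : ℝ} (hts : t ≤ s) (hsT : s ≤ T)
    (hg : ∀ u ∈ Ico t s, g u ≤ m) (hm : m < sSup (g '' Icc t T)) :
    sSup (g '' Icc t T) = sSup (g '' Icc s T) := by
  have hsub : g '' Icc s T ⊆ g '' Icc t T := image_mono (Icc_subset_Icc_left hts)
  have hne : (g '' Icc s T).Nonempty := (nonempty_Icc.2 hsT).image g
  by_cases hbdd : BddAbove (g '' Icc s T)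
  · have hbound : ∀ v ∈ g '' Icc t T, v ≤ max m (sSup (g '' Icc s T)) := by
      rintro _ ⟨u, ⟨htu, huT⟩, rfl⟩
      rcases lt_or_ge u s with hus | hsu
      · exact le_max_of_le_left (hg u ⟨htu, hus⟩)
      · exact le_max_of_le_right (le_csSup hbdd ⟨u, ⟨hsu, huT⟩, rfl⟩)
    have hle := csSup_le (hne.mono hsub) hbound
    exact le_antisymm ((le_max_iff.1 hle).resolve_left hm.not_ge)
      (csSup_le_csSup ⟨_, hbound⟩ hne hsub)
  · rw [Real.sSup_of_not_bddAbove hbdd, Real.sSup_of_not_bddAbove (mt (·.mono hsub) hbdd)]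

open Topology

theorem eventually_sSup_image_Icc_eq_of_tendsto_nhdsLT {g : ℝ → ℝ} {s T a b : ℝ} (hsT : s ≤ T)
    (hg : Tendsto g (𝓝[<] s) (𝓝 a))
    (hC : Tendsto (fun t => sSup (g '' Icc t T)) (𝓝[<] s) (𝓝 b)) (hab : a < b) :
    ∀ᶠ t in 𝓝[<] s, sSup (g '' Icc t T) = sSup (g '' Icc s T) := by
  obtain ⟨m, ham, hmb⟩ := exists_between hab
  obtain ⟨c, hcs, hc⟩ := mem_nhdsLT_iff_exists_Ioo_subset.1 (hg (Iio_mem_nhds ham))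
  filter_upwards [hC (Ioi_mem_nhds hmb), Ioo_mem_nhdsLT hcs] with t hmt hct
  exact sSup_image_Icc_eq_of_forall_Ico_le hct.2.le hsT
    (fun u hu => (hc ⟨hct.1.trans_le hu.1, hu.2⟩).le) hmt

theorem futureSup_flat_off_condition_general
    (μ : Measure Ω)
    (T : ℝ) (X Mhat Chat Yhat Xm Ym : ℝ → Ω → ℝ)
    (hMcadlag : ∀ ω, CadlagOn (fun t => Mhat t ω) T)
    (hCdef : ∀ t ∈ Icc (0:ℝ) T, ∀ ω,
      Chat t ω = sSup ((fun s => X s ω - Mhat s ω) '' Icc t T))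
    (hYdef : ∀ t ∈ Icc (0:ℝ) T, ∀ ω, Yhat t ω = Mhat t ω + Chat t ω)
    -- left limits of `X` and of `Ŷ`
    (hXm : ∀ ω, ∀ s ∈ Ioc (0:ℝ) T,
      Tendsto (fun u => X u ω) (nhdsWithin s (Iio s)) (nhds (Xm s ω)))
    (hYm : ∀ ω, ∀ s ∈ Ioc (0:ℝ) T,
      Tendsto (fun u => Yhat u ω) (nhdsWithin s (Iio s)) (nhds (Ym s ω)))
    -- the pathwise Stieltjes measure of `Ĉ`, realized via `F ω = -Ĉ(·, ω)`
    (F : Ω → StieltjesFunction ℝ)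
    (hF : ∀ ω, ∀ t ∈ Icc (0:ℝ) T, F ω t = -Chat t ω) :
    ∀ᵐ ω ∂μ, (F ω).measure {s ∈ Ioc (0:ℝ) T | Xm s ω < Ym s ω} = 0 := by
  refine Eventually.of_forall fun ω => measure_eq_zero_of_forall_exists_measure_Ioc_eq_zero _ ?_
  rintro s ⟨hs, hXY⟩
  obtain ⟨Mm, hMm⟩ := (hMcadlag ω).2 s hs
  have hC_lim : Tendsto (fun t => sSup ((fun u => X u ω - Mhat u ω) '' Icc t T)) (𝓝[<] s)
      (𝓝 (Ym s ω - Mm)) := by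
    refine ((hYm ω s hs).sub hMm).congr' ?_
    filter_upwards [Ioo_mem_nhdsLT hs.1] with t ht
    have htT : t ∈ Icc 0 T := ⟨ht.1.le, ht.2.le.trans hs.2⟩
    rw [hYdef t htT, hCdef t htT, add_sub_cancel_left]
  obtain ⟨t, hCts, ht⟩ := ((eventually_sSup_image_Icc_eq_of_tendsto_nhdsLT hs.2
    ((hXm ω s hs).sub hMm) hC_lim (sub_lt_sub_right hXY Mm)).and (Ioo_mem_nhdsLT hs.1)).exists
  have htT : t ∈ Icc 0 T := ⟨ht.1.le, ht.2.le.trans hs.2⟩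
  refine ⟨t, ht.2, ?_⟩
  rw [StieltjesFunction.measure_Ioc, hF ω s (Ioc_subset_Icc_self hs), hF ω t htT,
    hCdef s (Ioc_subset_Icc_self hs), hCdef t htT, hCts, sub_self, ENNReal.ofReal_zero]

/-- Flat-off condition: if `M̂` is a martingale with `M̂ 0 = 0` whose
future-supremum `Ĉ t = sup_{t ≤ s ≤ T} (X s - M̂ s)` is predictable, and
`Ŷ = M̂ + Ĉ`, then the (pathwise) Stieltjes measure of the nonincreasing process
`Ĉ` does not charge the set `{s : Ŷ_{s-} > X_{s-}}`, almost surely. -/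
theorem futureSup_flat_off_condition
    (μ : Measure Ω) [IsProbabilityMeasure μ] (ℱ : Filtration ℝ m0)
    (T : ℝ) (hT : 0 < T) (X U Mhat Chat Yhat Xm Ym : ℝ → Ω → ℝ)
    (hXad : ∀ t ∈ Icc (0:ℝ) T, StronglyMeasurable[ℱ t] (X t))
    (hXcadlag : ∀ ω, CadlagOn (fun t => X t ω) T)
    (hUmart : MartingaleOn ℱ μ U T)
    (hUnn : ∀ t ∈ Icc (0:ℝ) T, ∀ ω, 0 ≤ U t ω)
    (hUui : UniformIntegrable (fun t : Icc (0:ℝ) T => U t) 1 μ)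
    (hdom : ∀ t ∈ Icc (0:ℝ) T, ∀ ω, |X t ω| ≤ U t ω)
    (hMmart : MartingaleOn ℱ μ Mhat T) (hM0 : ∀ ω, Mhat 0 ω = 0)
    (hMcadlag : ∀ ω, CadlagOn (fun t => Mhat t ω) T)
    (hCdef : ∀ t ∈ Icc (0:ℝ) T, ∀ ω,
      Chat t ω = sSup ((fun s => X s ω - Mhat s ω) '' Icc t T))
    (hCpred : IsPredictable ℱ Chat)
    (hYdef : ∀ t ∈ Icc (0:ℝ) T, ∀ ω, Yhat t ω = Mhat t ω + Chat t ω)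
    -- left limits of `X` and of `Ŷ`
    (hXm : ∀ ω, ∀ s ∈ Ioc (0:ℝ) T,
      Tendsto (fun u => X u ω) (nhdsWithin s (Iio s)) (nhds (Xm s ω)))
    (hYm : ∀ ω, ∀ s ∈ Ioc (0:ℝ) T,
      Tendsto (fun u => Yhat u ω) (nhdsWithin s (Iio s)) (nhds (Ym s ω)))
    -- the pathwise Stieltjes measure of `Ĉ`, realized via `F ω = -Ĉ(·, ω)`
    (F : Ω → StieltjesFunction ℝ)
    (hF : ∀ ω, ∀ t ∈ Icc (0:ℝ) T, F ω t = -Chat t ω) :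
    ∀ᵐ ω ∂μ, (F ω).measure {s ∈ Ioc (0:ℝ) T | Xm s ω < Ym s ω} = 0 :=
  futureSup_flat_off_condition_general μ T X Mhat Chat Yhat Xm Ym hMcadlag hCdef hYdef hXm hYm F hF
end
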